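/- In the uniform-strength CN model with γ ≥ 1, there is no nonempty CN-war-stable network with maximum degree at most 2. -/
import Mathlib


open Finset

/-- The allies (neighbors) of `i` in network `g`, as a `Finset`. -/
noncomputable def nbrs {V : Type*} [Fintype V] (g : SimpleGraph V) (i : V) : Finset V :=
  @Finset.filter _ (fun j => g.Adj i j) (Classical.decPred _) Finset.univ

/-- The network `g` with the alliance `jk` added. -/
def addE {V : Type*} (g : SimpleGraph V) (j k : V) : SimpleGraph V :=
  g ⊔ SimpleGraph.fromEdgeSet {s(j, k)}

/-- The network `g` with the alliance `jk` deleted. -/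
def delE {V : Type*} (g : SimpleGraph V) (j k : V) : SimpleGraph V :=
  g.deleteEdges {s(j, k)}

/-- CN-vulnerability with uniform strengths `M C = |C|` and constant `γ`:
country `i` is CN-vulnerable at `g` if some clique `C` of `g` not containing `i`
satisfies `|C| > γ · (1 + |N_i(g) \ C|)`. -/
def CNVul {V : Type*} [Fintype V] [DecidableEq V] (g : SimpleGraph V) (γ : ℝ) (i : V) :
    Prop :=
  ∃ C : Finset V, g.IsClique ↑C ∧ i ∉ C ∧
    γ * (1 + ((nbrs g i) \ C).card) < (C.card : ℝ)

/-- CN-war-stability: (S1) no country CN-vulnerable; (S2) no country CN-vulnerable after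
adding any non-link; (S3) both endpoints of any link become CN-vulnerable upon its
deletion. -/
def CNWarStable {V : Type*} [Fintype V] [DecidableEq V] (g : SimpleGraph V) (γ : ℝ) :
    Prop :=
  (∀ v : V, ¬ CNVul g γ v) ∧
  (∀ j k : V, j ≠ k → ¬ g.Adj j k → ∀ v : V, ¬ CNVul (addE g j k) γ v) ∧
  (∀ j k : V, g.Adj j k → CNVul (delE g j k) γ j ∧ CNVul (delE g j k) γ k)

lemma mem_nbrs {V : Type*} [Fintype V] (g : SimpleGraph V) (i j : V) :
    j ∈ nbrs g i ↔ g.Adj i j := by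
  simp [nbrs]

lemma nbrs_sub_pair {V : Type*} [Fintype V] [DecidableEq V] (g : SimpleGraph V) (i k x : V)
    (hk : g.Adj i k) (hx : g.Adj i x) (hkx : k ≠ x) (hcard : (nbrs g i).card ≤ 2) :
    nbrs g i ⊆ {k, x} := by
  have hsub : ({k, x} : Finset V) ⊆ nbrs g i := by
    intro y hy
    simp only [Finset.mem_insert, Finset.mem_singleton] at hy
    rcases hy with rfl | rfl
    · exact (mem_nbrs g i y).2 hk
    · exact (mem_nbrs g i y).2 hx
  have h2 : (nbrs g i).card ≤ ({k, x} : Finset V).card := by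
    rw [Finset.card_pair hkx]; exact hcard
  rw [← Finset.eq_of_subset_of_card_le hsub h2]

lemma pairVul {V : Type*} [Fintype V] [DecidableEq V] (h : SimpleGraph V) (γ : ℝ)
    (j k x : V) (hadj : h.Adj k x) (hjk : j ≠ k) (hjx : j ≠ x)
    (hsub : nbrs h j ⊆ {k, x}) (hγ : γ < 2) : CNVul h γ j := by
  refine ⟨{k, x}, ?_, ?_, ?_⟩
  · intro u hu v hv huv
    simp only [Finset.coe_insert, Finset.coe_singleton, Set.mem_insert_iff,
      Set.mem_singleton_iff] at hu hv
    rcases hu with rfl | rfl <;> rcases hv with rfl | rfl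
    · exact absurd rfl huv
    · exact hadj
    · exact hadj.symm
    · exact absurd rfl huv
  · simp [hjk, hjx]
  · have h0 : (nbrs h j \ {k, x}) = ∅ := Finset.sdiff_eq_empty_iff_subset.2 hsub
    rw [h0, Finset.card_pair hadj.ne]
    simpa using hγ

lemma clique_card_le {V : Type*} [Fintype V] [DecidableEq V] (g : SimpleGraph V)
    (hdeg : ∀ v, (nbrs g v).card ≤ 2) (C : Finset V) (hC : g.IsClique ↑C) :
    C.card ≤ 3 := by
  rcases C.eq_empty_or_nonempty with rfl | ⟨v, hv⟩
  · simp
  · have hsub : C.erase v ⊆ nbrs g v := by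
      intro y hy
      rw [mem_nbrs]
      exact hC (Finset.mem_coe.2 hv) (Finset.mem_coe.2 (Finset.mem_of_mem_erase hy))
        (Finset.ne_of_mem_erase hy).symm
    have h1 := Finset.card_le_card hsub
    have h2 := hdeg v
    have h3 := Finset.card_erase_of_mem hv
    omega

lemma nbrs_mono {V : Type*} [Fintype V] {h g : SimpleGraph V} (hle : h ≤ g) (v : V) :
    nbrs h v ⊆ nbrs g v := by
  intro y hy
  rw [mem_nbrs] at hy ⊢
  exact hle hy

lemma mem_nbrs_delE {V : Type*} [Fintype V] (g : SimpleGraph V) (j k y : V) (hjk : j ≠ k) :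
    y ∈ nbrs (delE g j k) j ↔ y ∈ nbrs g j ∧ y ≠ k := by
  rw [mem_nbrs, mem_nbrs, delE, SimpleGraph.deleteEdges_adj]
  simp only [Set.mem_singleton_iff, Sym2.eq_iff]
  constructor
  · rintro ⟨ha, hb⟩
    refine ⟨ha, fun h => hb (Or.inl ⟨trivial, h⟩)⟩
  · rintro ⟨ha, hb⟩
    refine ⟨ha, ?_⟩
    rintro (⟨-, rfl⟩ | ⟨rfl, rfl⟩)
    · exact hb rfl
    · exact hjk rfl

lemma nbrs_addE {V : Type*} [Fintype V] (g : SimpleGraph V) (k x j : V)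
    (hjk : j ≠ k) (hjx : j ≠ x) :
    nbrs (addE g k x) j = nbrs g j := by
  ext y
  rw [mem_nbrs, mem_nbrs, addE]
  simp only [SimpleGraph.sup_adj, SimpleGraph.fromEdgeSet_adj, Set.mem_singleton_iff,
    Sym2.eq_iff]
  constructor
  · rintro (h | ⟨⟨rfl, rfl⟩ | ⟨rfl, rfl⟩, hne⟩)
    · exact h
    · exact absurd rfl hjk
    · exact absurd rfl hjx
  · exact Or.inl

lemma addE_adj_self {V : Type*} (g : SimpleGraph V) (k x : V) (h : k ≠ x) :
    (addE g k x).Adj k x := by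
  rw [addE]
  simp [SimpleGraph.fromEdgeSet_adj, h]

/-- with `γ ≥ 1`, no nonempty network of maximum degree at most 2 is
CN-war-stable. -/
theorem no_cn_stable_maxdeg_two {n : ℕ} (hn : 3 ≤ n) (γ : ℝ) (hγ : 1 ≤ γ)
    (g : SimpleGraph (Fin n)) (hne : ∃ u v : Fin n, g.Adj u v)
    (hdeg : ∀ v : Fin n, (nbrs g v).card ≤ 2) :
    ¬ CNWarStable g γ := by
  rintro ⟨hS1, hS2, hS3⟩
  by_cases htri : ∃ a b c : Fin n, g.Adj a b ∧ g.Adj a c ∧ g.Adj b c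
  · obtain ⟨a, b, c, hab, hac, hbc⟩ := htri
    by_cases hγ2 : γ < 2
    · exact hS1 a (pairVul g γ a b c hbc hab.ne hac.ne
        (nbrs_sub_pair g a b c hab hac hbc.ne (hdeg a)) hγ2)
    · push_neg at hγ2
      obtain ⟨C, hCclique, haC, hlt⟩ := (hS3 a b hab).1
      have hle : delE g a b ≤ g := SimpleGraph.deleteEdges_le _
      have hCg : g.IsClique ↑C := hCclique.mono hle
      have hC3 : C.card ≤ 3 := clique_card_le g hdeg C hCg
      have hcadj : c ∈ nbrs (delE g a b) a := by
        rw [mem_nbrs_delE g a b c hab.ne]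
        exact ⟨(mem_nbrs g a c).2 hac, hbc.ne'⟩
      have hcC : c ∉ C := by
        intro hcC
        -- C.card ≥ 3 since |C| > γ(1+D) ≥ 2
        have hD : (0:ℝ) ≤ ((nbrs (delE g a b) a \ C).card : ℝ) := Nat.cast_nonneg _
        have h2lt : (2:ℝ) < (C.card : ℝ) := by nlinarith
        have h3le : 3 ≤ C.card := by exact_mod_cast h2lt
        -- but C ⊆ {b, c}
        have hsubC : C ⊆ {b, c} := by
          intro y hy
          by_cases hyc : y = c
          · simp [hyc]
          · have hy' : y ∈ C.erase c := Finset.mem_erase.2 ⟨hyc, hy⟩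
            have hyn : y ∈ nbrs g c := by
              rw [mem_nbrs]
              exact hCg (Finset.mem_coe.2 hcC) (Finset.mem_coe.2 hy) (fun h => hyc h.symm)
            have := nbrs_sub_pair g c a b hac.symm hbc.symm hab.ne (hdeg c) hyn
            simp only [Finset.mem_insert, Finset.mem_singleton] at this
            rcases this with rfl | rfl
            · exact absurd hy haC
            · simp
        have := Finset.card_le_card hsubC
        have hle2 : ({b, c} : Finset (Fin n)).card ≤ 2 := Finset.card_insert_le _ _ |>.trans (by simp)
        omega
      have hDmem : c ∈ nbrs (delE g a b) a \ C := Finset.mem_sdiff.2 ⟨hcadj, hcC⟩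
      have hD1 : 1 ≤ (nbrs (delE g a b) a \ C).card := Finset.card_pos.2 ⟨c, hDmem⟩
      have hD1' : (1:ℝ) ≤ ((nbrs (delE g a b) a \ C).card : ℝ) := by exact_mod_cast hD1
      have hC3' : (C.card : ℝ) ≤ 3 := by exact_mod_cast hC3
      nlinarith
  · obtain ⟨j, k, hjk⟩ := hne
    obtain ⟨C, hCclique, hjC, hlt⟩ := (hS3 j k hjk).1
    have hle : delE g j k ≤ g := SimpleGraph.deleteEdges_le _
    have hCg : g.IsClique ↑C := hCclique.mono hle
    have hC2 : C.card ≤ 2 := by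
      by_contra hcon
      push_neg at hcon
      obtain ⟨a, b, c, ha, hb, hc, hab, hac, hbc⟩ := Finset.two_lt_card_iff.1 hcon
      exact htri ⟨a, b, c,
        hCg (Finset.mem_coe.2 ha) (Finset.mem_coe.2 hb) hab,
        hCg (Finset.mem_coe.2 ha) (Finset.mem_coe.2 hc) hac,
        hCg (Finset.mem_coe.2 hb) (Finset.mem_coe.2 hc) hbc⟩
    have hC2' : (C.card : ℝ) ≤ 2 := by exact_mod_cast hC2
    have hDnat : (nbrs (delE g j k) j \ C).card = 0 := by
      by_contra hcon
      have h1 : 1 ≤ (nbrs (delE g j k) j \ C).card := Nat.one_le_iff_ne_zero.2 hcon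
      have h1' : (1:ℝ) ≤ ((nbrs (delE g j k) j \ C).card : ℝ) := by exact_mod_cast h1
      nlinarith
    have hγ2 : γ < 2 := by
      rw [hDnat] at hlt
      simp only [Nat.cast_zero, add_zero, mul_one] at hlt
      linarith
    have hCcard : C.card = 2 := by
      have h1 : (1:ℝ) < (C.card : ℝ) := by
        rw [hDnat] at hlt
        simp only [Nat.cast_zero, add_zero, mul_one] at hlt
        linarith
      have : 1 < C.card := by exact_mod_cast h1
      omega
    obtain ⟨a, b, hab', hCeq⟩ := Finset.card_eq_two.1 hCcard
    have hadjab : g.Adj a b := by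
      apply hCg (Finset.mem_coe.2 (by simp [hCeq])) (Finset.mem_coe.2 (by simp [hCeq])) hab'
    have hsubC : nbrs (delE g j k) j ⊆ C :=
      Finset.sdiff_eq_empty_iff_subset.1 (Finset.card_eq_zero.1 hDnat)
    have hNj : ∀ y ∈ nbrs g j, y = k ∨ y ∈ C := by
      intro y hy
      by_cases hyk : y = k
      · exact Or.inl hyk
      · exact Or.inr (hsubC ((mem_nbrs_delE g j k y hjk.ne).2 ⟨hy, hyk⟩))
    have hja : j ≠ a := fun h => hjC (by simp [hCeq, h])
    have hjb : j ≠ b := fun h => hjC (by simp [hCeq, h])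
    have hkC : k ∉ C := by
      intro hkC
      apply hS1 j
      refine pairVul g γ j a b hadjab hja hjb ?_ hγ2
      intro y hy
      rcases hNj y hy with rfl | hyC
      · rw [hCeq] at hkC; exact hkC
      · rw [hCeq] at hyC; exact hyC
    have hka : k ≠ a := fun h => hkC (by simp [hCeq, h])
    have hkb : k ≠ b := fun h => hkC (by simp [hCeq, h])
    have hkmem : k ∈ nbrs g j := (mem_nbrs g j k).2 hjk
    -- choose x ∈ {a,b} with nbrs g j ⊆ {k, x}
    have hx : ∃ x : Fin n, x ∈ C ∧ nbrs g j ⊆ {k, x} := by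
      by_cases hbj : b ∈ nbrs g j
      · refine ⟨b, by simp [hCeq], ?_⟩
        exact nbrs_sub_pair g j k b hjk ((mem_nbrs g j b).1 hbj) hkb (hdeg j)
      · refine ⟨a, by simp [hCeq], ?_⟩
        intro y hy
        rcases hNj y hy with rfl | hyC
        · simp
        · rw [hCeq] at hyC
          simp only [Finset.mem_insert, Finset.mem_singleton] at hyC
          rcases hyC with rfl | rfl
          · simp
          · exact absurd hy hbj
    obtain ⟨x, hxC, hsubx⟩ := hx
    have hjx : j ≠ x := fun h => hjC (h ▸ hxC)
    have hkx : k ≠ x := fun h => hkC (h ▸ hxC)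
    by_cases hadjkx : g.Adj k x
    · exact hS1 j (pairVul g γ j k x hadjkx hjk.ne hjx hsubx hγ2)
    · apply hS2 k x hkx hadjkx j
      refine pairVul (addE g k x) γ j k x (addE_adj_self g k x hkx) hjk.ne hjx ?_ hγ2
      rw [nbrs_addE g k x j hjk.ne hjx]
      exact hsubx
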